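/- arXiv:1905.00148 — 5 statements merged into one kernel-verified Lean document; each statement's English description precedes it below -/
import Mathlib

section
/- Consider a Capacitated IAP instance with d_t ≤ U for all t, and let a feasible splittable solution be given in which each demand is delivered wholly on a single day (i.e., for each t with d_t > 0 there is a day σ(t) ≤ t with q(σ(t),t) = d_t and q(s,t) = 0 for s ≠ σ(t)). Then there exists a feasible unsplittable solution with the same service days σ whose cost is at most twice the cost of the given splittable solution. -/
open Classical

/-- Cost of a splittable solution `q` to a Capacitated IAP instance. -/
noncomputable def csIapCost (W U : ℝ) (T : ℕ) (h : ℕ → ℕ → ℝ) (q : ℕ → ℕ → ℝ) : ℝ :=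
  W * ∑ s ∈ Finset.Icc 1 T, ((⌈(∑ t ∈ Finset.Icc s T, q s t) / U⌉ : ℤ) : ℝ)
    + ∑ t ∈ Finset.Icc 1 T, ∑ s ∈ Finset.Icc 1 t, h s t * q s t

/-- The set of demand days: days `t ∈ {1,…,T}` with positive demand. -/
noncomputable def iapDemandDays (T : ℕ) (d : ℕ → ℝ) : Finset ℕ :=
  (Finset.Icc 1 T).filter fun t => 0 < d t

/-- A feasible unsplittable solution: service days `σ` with `1 ≤ σ t ≤ t` on demand
days, trip labels `τ`, every trip (nonempty fiber of `t ↦ (σ t, τ t)`) carrying total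
demand at most `U`. -/
noncomputable def cuIapFeasible (U : ℝ) (T : ℕ) (d : ℕ → ℝ) (σ τ : ℕ → ℕ) : Prop :=
  (∀ t ∈ iapDemandDays T d, 1 ≤ σ t ∧ σ t ≤ t) ∧
  ∀ s j : ℕ,
    ∑ t ∈ (iapDemandDays T d).filter (fun t => σ t = s ∧ τ t = j), d t ≤ U

/-- Cost of an unsplittable solution: `W` times the total number of trips, plus the
holding costs. -/
noncomputable def cuIapCost (W : ℝ) (T : ℕ) (d : ℕ → ℝ) (h : ℕ → ℕ → ℝ)
    (σ τ : ℕ → ℕ) : ℝ :=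
  W * ((iapDemandDays T d).image (fun t => (σ t, τ t))).card
    + ∑ t ∈ iapDemandDays T d, h (σ t) t * d t

/-- Prefix sum of demands delivered on day `σ t`, over demand days before `t`. -/
noncomputable def iapPrefix (T : ℕ) (d : ℕ → ℝ) (σ : ℕ → ℕ) (t : ℕ) : ℝ :=
  ∑ t' ∈ (iapDemandDays T d).filter (fun t' => σ t' = σ t ∧ t' < t), d t'

/-- Trip label. -/
noncomputable def iapTau (U : ℝ) (T : ℕ) (d : ℕ → ℝ) (σ : ℕ → ℕ) (t : ℕ) : ℕ :=
  2 * ⌊iapPrefix T d σ t / U⌋₊ +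
    (if iapPrefix T d σ t + d t ≤ (⌊iapPrefix T d σ t / U⌋₊ + 1) * U then 0 else 1)

lemma iapPrefix_nonneg (T : ℕ) (d : ℕ → ℝ) (σ : ℕ → ℕ) (t : ℕ) :
    0 ≤ iapPrefix T d σ t := by
  apply Finset.sum_nonneg
  intro t' ht'
  simp only [iapPrefix, iapDemandDays, Finset.mem_filter] at ht'
  exact ht'.1.2.le

lemma iapPrefix_mono (T : ℕ) (d : ℕ → ℝ) (σ : ℕ → ℕ) {t t' : ℕ}
    (ht : t ∈ iapDemandDays T d) (hσ : σ t = σ t') (htt : t < t') :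
    iapPrefix T d σ t + d t ≤ iapPrefix T d σ t' := by
  have hsub : insert t ((iapDemandDays T d).filter (fun u => σ u = σ t ∧ u < t)) ⊆
      (iapDemandDays T d).filter (fun u => σ u = σ t' ∧ u < t') := by
    intro u hu
    rcases Finset.mem_insert.1 hu with rfl | hu
    · exact Finset.mem_filter.2 ⟨ht, hσ, htt⟩
    · rcases Finset.mem_filter.1 hu with ⟨h1, h2, h3⟩
      exact Finset.mem_filter.2 ⟨h1, h2.trans hσ, h3.trans htt⟩
  have hnot : t ∉ (iapDemandDays T d).filter (fun u => σ u = σ t ∧ u < t) := by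
    simp
  calc iapPrefix T d σ t + d t
      = ∑ u ∈ insert t ((iapDemandDays T d).filter (fun u => σ u = σ t ∧ u < t)), d u := by
        rw [Finset.sum_insert hnot, iapPrefix]; ring
    _ ≤ iapPrefix T d σ t' := by
        apply Finset.sum_le_sum_of_subset_of_nonneg hsub
        intro u hu _
        rcases Finset.mem_filter.1 hu with ⟨h1, _⟩
        rcases Finset.mem_filter.1 h1 with ⟨_, h2⟩
        exact h2.le

/-- Sum of demands over all demand days served on day `σ t`, up to and including `t`. -/
lemma iapPrefix_add_le (T : ℕ) (d : ℕ → ℝ) (σ : ℕ → ℕ) {t : ℕ}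
    (ht : t ∈ iapDemandDays T d) :
    iapPrefix T d σ t + d t ≤
      ∑ u ∈ (iapDemandDays T d).filter (fun u => σ u = σ t), d u := by
  have hsub : insert t ((iapDemandDays T d).filter (fun u => σ u = σ t ∧ u < t)) ⊆
      (iapDemandDays T d).filter (fun u => σ u = σ t) := by
    intro u hu
    rcases Finset.mem_insert.1 hu with rfl | hu
    · exact Finset.mem_filter.2 ⟨ht, rfl⟩
    · rcases Finset.mem_filter.1 hu with ⟨h1, h2, _⟩
      exact Finset.mem_filter.2 ⟨h1, h2⟩
  have hnot : t ∉ (iapDemandDays T d).filter (fun u => σ u = σ t ∧ u < t) := by simp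
  calc iapPrefix T d σ t + d t
      = ∑ u ∈ insert t ((iapDemandDays T d).filter (fun u => σ u = σ t ∧ u < t)), d u := by
        rw [Finset.sum_insert hnot, iapPrefix]; ring
    _ ≤ _ := by
        apply Finset.sum_le_sum_of_subset_of_nonneg hsub
        intro u hu _
        rcases Finset.mem_filter.1 hu with ⟨h1, _⟩
        rcases Finset.mem_filter.1 h1 with ⟨_, h2⟩
        exact h2.le

lemma iapTau_floor_eq {U : ℝ} (hU : 0 < U) {T : ℕ} {d : ℕ → ℝ} {σ : ℕ → ℕ} {t t' : ℕ}
    (hτ : iapTau U T d σ t = iapTau U T d σ t') :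
    ⌊iapPrefix T d σ t / U⌋₊ = ⌊iapPrefix T d σ t' / U⌋₊ ∧
    ((iapPrefix T d σ t + d t ≤ (⌊iapPrefix T d σ t / U⌋₊ + 1) * U) ↔
      (iapPrefix T d σ t' + d t' ≤ (⌊iapPrefix T d σ t' / U⌋₊ + 1) * U)) := by
  unfold iapTau at hτ
  split_ifs at hτ with h1 h2 h2 <;> constructor <;> first | omega | tauto

lemma iapTau_sum_le {U : ℝ} (hU : 0 < U) {T : ℕ} {d : ℕ → ℝ}
    (hdU : ∀ t ∈ Finset.Icc 1 T, d t ≤ U) (σ : ℕ → ℕ) (s j : ℕ) :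
    ∑ t ∈ (iapDemandDays T d).filter (fun t => σ t = s ∧ iapTau U T d σ t = j), d t ≤ U := by
  set DD := iapDemandDays T d with hDD
  set G := DD.filter (fun t => σ t = s ∧ iapTau U T d σ t = j) with hG
  by_cases hGne : G.Nonempty
  · obtain ⟨t1, ht1⟩ := hGne
    rcases Finset.mem_filter.1 ht1 with ⟨ht1DD, hσ1, hτ1⟩
    set k := ⌊iapPrefix T d σ t1 / U⌋₊ with hk
    -- facts about every member of G
    have hmem : ∀ t ∈ G, t ∈ DD ∧ σ t = s ∧ ⌊iapPrefix T d σ t / U⌋₊ = k ∧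
        ((iapPrefix T d σ t + d t ≤ (k + 1) * U) ↔
          (iapPrefix T d σ t1 + d t1 ≤ (k + 1) * U)) := by
      intro t ht
      rcases Finset.mem_filter.1 ht with ⟨htDD, hσt, hτt⟩
      have := iapTau_floor_eq hU (hτt.trans hτ1.symm)
      refine ⟨htDD, hσt, this.1, ?_⟩
      rw [this.1] at this
      rw [hk]
      exact this.2
    have hposG : ∀ t ∈ G, 0 < d t := by
      intro t ht
      have := (hmem t ht).1
      rw [hDD, iapDemandDays, Finset.mem_filter] at this
      exact this.2
    have hfloor_le : ∀ t ∈ G, (k : ℝ) * U ≤ iapPrefix T d σ t := by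
      intro t ht
      have hf := (hmem t ht).2.2.1
      have := Nat.floor_le (div_nonneg (iapPrefix_nonneg T d σ t) hU.le)
      rw [hf] at this
      calc (k : ℝ) * U ≤ (iapPrefix T d σ t / U) * U := by nlinarith
        _ = iapPrefix T d σ t := div_mul_cancel₀ _ hU.ne'
    have hfloor_lt : ∀ t ∈ G, iapPrefix T d σ t < ((k : ℝ) + 1) * U := by
      intro t ht
      have hf := (hmem t ht).2.2.1
      have := Nat.lt_floor_add_one (iapPrefix T d σ t / U)
      rw [hf] at this
      calc iapPrefix T d σ t = (iapPrefix T d σ t / U) * U := (div_mul_cancel₀ _ hU.ne').symm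
        _ < ((k : ℝ) + 1) * U := by push_cast at this ⊢; nlinarith
    by_cases hbr : iapPrefix T d σ t1 + d t1 ≤ ((k : ℝ) + 1) * U
    · -- even case : all ends ≤ (k+1)U
      have hbr' : ∀ t ∈ G, iapPrefix T d σ t + d t ≤ ((k : ℝ) + 1) * U := by
        intro t ht
        have := (hmem t ht).2.2.2
        push_cast at this
        exact this.2 hbr
      set tmax := G.max' ⟨t1, ht1⟩ with htmax
      set t0 := G.min' ⟨t1, ht1⟩ with ht0
      have htmaxG := G.max'_mem ⟨t1, ht1⟩
      have ht0G := G.min'_mem ⟨t1, ht1⟩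
      have ht0max : t0 ≤ tmax := G.min'_le _ htmaxG
      have hσmax : σ tmax = s := (hmem _ htmaxG).2.1
      have hσ0 : σ t0 = s := (hmem _ ht0G).2.1
      -- sum over G ≤ sum over M
      set M := DD.filter (fun u => σ u = s ∧ t0 ≤ u ∧ u ≤ tmax) with hM
      have hGM : G ⊆ M := by
        intro t ht
        rcases Finset.mem_filter.1 ht with ⟨htDD, hσt, _⟩
        exact Finset.mem_filter.2 ⟨htDD, hσt, G.min'_le _ ht, G.le_max' _ ht⟩
      have hdnn : ∀ u ∈ DD, 0 ≤ d u := by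
        intro u hu
        rw [hDD, iapDemandDays, Finset.mem_filter] at hu
        exact hu.2.le
      have h1 : ∑ t ∈ G, d t ≤ ∑ t ∈ M, d t :=
        Finset.sum_le_sum_of_subset_of_nonneg hGM (fun u hu _ => hdnn u (Finset.mem_filter.1 hu).1)
      -- sum over M = (P tmax + d tmax) - P t0
      set B := DD.filter (fun u => σ u = s ∧ u < t0) with hB
      set A := DD.filter (fun u => σ u = s ∧ u ≤ tmax) with hA
      have hsplit : ∑ u ∈ B, d u + ∑ u ∈ M, d u = ∑ u ∈ A, d u := by
        rw [← Finset.sum_union]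
        · congr 1
          ext u
          simp only [hB, hM, hA, Finset.mem_union, Finset.mem_filter]
          constructor
          · rintro (⟨h1, h2, h3⟩ | ⟨h1, h2, h3⟩)
            · exact ⟨h1, h2, by omega⟩
            · exact ⟨h1, h2, h3.2⟩
          · rintro ⟨h1, h2, h3⟩
            by_cases h4 : u < t0
            · exact Or.inl ⟨h1, h2, h4⟩
            · exact Or.inr ⟨h1, h2, by omega, h3⟩
        · rw [Finset.disjoint_left]
          intro u hu hu'
          rcases Finset.mem_filter.1 hu with ⟨_, _, h4⟩
          rcases Finset.mem_filter.1 hu' with ⟨_, _, h5, _⟩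
          omega
      have hBP : ∑ u ∈ B, d u = iapPrefix T d σ t0 := by
        rw [iapPrefix, hB, hσ0]
      have hAP : ∑ u ∈ A, d u = iapPrefix T d σ tmax + d tmax := by
        have : A = insert tmax (DD.filter (fun u => σ u = σ tmax ∧ u < tmax)) := by
          ext u
          simp only [hA, Finset.mem_insert, Finset.mem_filter, hσmax]
          constructor
          · rintro ⟨h1, h2, h3⟩
            rcases eq_or_lt_of_le h3 with rfl | h4
            · exact Or.inl rfl
            · exact Or.inr ⟨h1, h2, h4⟩
          · rintro (rfl | ⟨h1, h2, h3⟩)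
            · exact ⟨(hmem _ htmaxG).1, hσmax, le_refl _⟩
            · exact ⟨h1, h2, h3.le⟩
        rw [this, Finset.sum_insert (by simp), iapPrefix]
        ring
      have h2 : ∑ u ∈ M, d u = iapPrefix T d σ tmax + d tmax - iapPrefix T d σ t0 := by
        rw [← hAP, ← hsplit, hBP]; ring
      have h3 : iapPrefix T d σ tmax + d tmax ≤ ((k : ℝ) + 1) * U := hbr' _ htmaxG
      have h4 : (k : ℝ) * U ≤ iapPrefix T d σ t0 := hfloor_le _ ht0G
      calc ∑ t ∈ G, d t ≤ ∑ t ∈ M, d t := h1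
        _ ≤ ((k : ℝ) + 1) * U - (k : ℝ) * U := by rw [h2]; linarith
        _ = U := by ring
    · -- odd case : at most one element
      have hbr' : ∀ t ∈ G, ¬ (iapPrefix T d σ t + d t ≤ ((k : ℝ) + 1) * U) := by
        intro t ht hc
        have := (hmem t ht).2.2.2
        push_cast at this
        exact hbr (this.1 hc)
      have hsingle : ∀ t ∈ G, t = t1 := by
        intro t ht
        by_contra hne
        rcases lt_trichotomy t t1 with hlt | heq | hgt
        · have := iapPrefix_mono T d σ (hmem t ht).1
            ((hmem t ht).2.1.trans hσ1.symm) hlt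
          have h5 := hfloor_lt t1 ht1
          have h6 := hbr' t ht
          push_cast at h5 h6 this
          linarith
        · exact hne heq
        · have := iapPrefix_mono T d σ ht1DD (hσ1.trans ((hmem t ht).2.1).symm) hgt
          have h5 := hfloor_lt t ht
          push_cast at h5 this
          exact hbr (by linarith)
      have : G ⊆ {t1} := fun t ht => Finset.mem_singleton.2 (hsingle t ht)
      have hle : ∑ t ∈ G, d t ≤ ∑ t ∈ ({t1} : Finset ℕ), d t := by
        apply Finset.sum_le_sum_of_subset_of_nonneg this
        intro u hu _
        rcases Finset.mem_singleton.1 hu with rfl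
        exact (hposG u ht1).le
      have ht1Icc : t1 ∈ Finset.Icc 1 T := by
        have := ht1DD
        rw [hDD, iapDemandDays, Finset.mem_filter] at this
        exact this.1
      have := hdU t1 ht1Icc
      rw [Finset.sum_singleton] at hle
      linarith
  · rw [Finset.not_nonempty_iff_eq_empty] at hGne
    rw [hGne, Finset.sum_empty]
    exact hU.le
/-- Any feasible splittable solution of a Capacitated IAP instance (with all demands at
most `U`) in which every demand is delivered wholly on a single day `σ t` can be
converted, keeping the same service days `σ`, into a feasible unsplittable solution of
cost at most twice the splittable cost. -/
theorem split_to_unsplit_two_approx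
    (W U : ℝ) (hW : 0 ≤ W) (hU : 0 < U)
    (T : ℕ) (d : ℕ → ℝ) (hd : ∀ t ∈ Finset.Icc 1 T, 0 ≤ d t)
    (hdU : ∀ t ∈ Finset.Icc 1 T, d t ≤ U)
    (h : ℕ → ℕ → ℝ)
    (hh_nonneg : ∀ s t, 1 ≤ s → s ≤ t → t ≤ T → 0 ≤ h s t)
    (hh_mono : ∀ s s' t, 1 ≤ s → s ≤ s' → s' ≤ t → t ≤ T → h s' t ≤ h s t)
    (q : ℕ → ℕ → ℝ) (hq_nonneg : ∀ s t, 0 ≤ q s t)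
    (hq_feas : ∀ t ∈ Finset.Icc 1 T, ∑ s ∈ Finset.Icc 1 t, q s t = d t)
    (σ : ℕ → ℕ)
    (hσ : ∀ t ∈ iapDemandDays T d, 1 ≤ σ t ∧ σ t ≤ t)
    (hsingle : ∀ t ∈ iapDemandDays T d,
      q (σ t) t = d t ∧ ∀ s ∈ Finset.Icc 1 t, s ≠ σ t → q s t = 0) :
    ∃ τ : ℕ → ℕ,
      cuIapFeasible U T d σ τ ∧
      cuIapCost W T d h σ τ ≤ 2 * csIapCost W U T h q := by
  refine ⟨iapTau U T d σ, ⟨hσ, fun s j => iapTau_sum_le hU hdU σ s j⟩, ?_⟩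
  set τ := iapTau U T d σ with hτdef
  set Q : ℕ → ℝ := fun s => ∑ t ∈ Finset.Icc s T, q s t with hQ
  have hQnn : ∀ s, 0 ≤ Q s := fun s => Finset.sum_nonneg fun t _ => hq_nonneg s t
  have hceil_nn : ∀ s, (0 : ℤ) ≤ ⌈Q s / U⌉ :=
    fun s => Int.ceil_nonneg (div_nonneg (hQnn s) hU.le)
  have hDDmem : ∀ t ∈ iapDemandDays T d, t ∈ Finset.Icc 1 T ∧ 0 < d t := by
    intro t ht
    rw [iapDemandDays, Finset.mem_filter] at ht
    exact ht
  -- bound on trip labels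
  have htau_lt : ∀ t ∈ iapDemandDays T d, τ t < 2 * (⌈Q (σ t) / U⌉).toNat := by
    intro t ht
    have hk : ⌊iapPrefix T d σ t / U⌋₊ < (⌈Q (σ t) / U⌉).toNat := by
      have h1 : (⌊iapPrefix T d σ t / U⌋₊ : ℝ) * U ≤ iapPrefix T d σ t := by
        have := Nat.floor_le (div_nonneg (iapPrefix_nonneg T d σ t) hU.le)
        calc (⌊iapPrefix T d σ t / U⌋₊ : ℝ) * U ≤ (iapPrefix T d σ t / U) * U := by nlinarith
          _ = iapPrefix T d σ t := div_mul_cancel₀ _ hU.ne'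
      have h2 := iapPrefix_add_le T d σ ht
      have h3 : ∑ u ∈ (iapDemandDays T d).filter (fun u => σ u = σ t), d u ≤ Q (σ t) := by
        have he : ∀ u ∈ (iapDemandDays T d).filter (fun u => σ u = σ t), d u = q (σ t) u := by
          intro u hu
          rcases Finset.mem_filter.1 hu with ⟨huDD, hσu⟩
          rw [← hσu, (hsingle u huDD).1]
        rw [Finset.sum_congr rfl he, hQ]
        apply Finset.sum_le_sum_of_subset_of_nonneg
        · intro u hu
          rcases Finset.mem_filter.1 hu with ⟨huDD, hσu⟩
          have h4 := (hDDmem u huDD).1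
          rw [Finset.mem_Icc] at h4 ⊢
          have h5 := (hσ u huDD).2
          omega
        · intro u _ _
          exact hq_nonneg _ _
      have hdt := (hDDmem t ht).2
      have h6 : (⌊iapPrefix T d σ t / U⌋₊ : ℝ) < Q (σ t) / U := by
        rw [lt_div_iff₀ hU]
        nlinarith
      have h7 : (⌊iapPrefix T d σ t / U⌋₊ : ℤ) < ⌈Q (σ t) / U⌉ := by
        apply Int.lt_ceil.2
        push_cast
        exact h6
      exact Int.lt_toNat.2 h7
    rw [hτdef]
    unfold iapTau
    split_ifs <;> omega
  -- counting trips
  have hcard : ((iapDemandDays T d).image (fun t => (σ t, τ t))).card ≤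
      ∑ s ∈ Finset.Icc 1 T, 2 * (⌈Q s / U⌉).toNat := by
    have hsub : (iapDemandDays T d).image (fun t => (σ t, τ t)) ⊆
        (Finset.Icc 1 T).biUnion
          (fun s => (Finset.range (2 * (⌈Q s / U⌉).toNat)).image (fun j => (s, j))) := by
      intro p hp
      rcases Finset.mem_image.1 hp with ⟨t, ht, rfl⟩
      apply Finset.mem_biUnion.2
      refine ⟨σ t, ?_, Finset.mem_image.2 ⟨τ t, Finset.mem_range.2 (htau_lt t ht), rfl⟩⟩
      have h4 := (hDDmem t ht).1
      rw [Finset.mem_Icc] at h4 ⊢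
      exact ⟨(hσ t ht).1, le_trans (hσ t ht).2 h4.2⟩
    calc ((iapDemandDays T d).image (fun t => (σ t, τ t))).card
        ≤ _ := Finset.card_le_card hsub
      _ ≤ ∑ s ∈ Finset.Icc 1 T,
            ((Finset.range (2 * (⌈Q s / U⌉).toNat)).image (fun j => (s, j))).card :=
          Finset.card_biUnion_le
      _ ≤ ∑ s ∈ Finset.Icc 1 T, 2 * (⌈Q s / U⌉).toNat := by
          apply Finset.sum_le_sum
          intro s _
          exact le_trans Finset.card_image_le (le_of_eq (Finset.card_range _))
  -- holding cost equality
  have hhold : ∑ t ∈ iapDemandDays T d, h (σ t) t * d t =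
      ∑ t ∈ Finset.Icc 1 T, ∑ s ∈ Finset.Icc 1 t, h s t * q s t := by
    rw [← Finset.sum_filter_add_sum_filter_not (Finset.Icc 1 T) (fun t => 0 < d t)
      (fun t => ∑ s ∈ Finset.Icc 1 t, h s t * q s t)]
    have hz : ∑ t ∈ (Finset.Icc 1 T).filter (fun t => ¬ 0 < d t),
        ∑ s ∈ Finset.Icc 1 t, h s t * q s t = 0 := by
      apply Finset.sum_eq_zero
      intro t ht
      rcases Finset.mem_filter.1 ht with ⟨htI, hnd⟩
      have hd0 : d t = 0 := le_antisymm (not_lt.1 hnd) (hd t htI)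
      have hq0 : ∀ s ∈ Finset.Icc 1 t, q s t = 0 := by
        have := hq_feas t htI
        rw [hd0] at this
        intro s hs
        exact (Finset.sum_eq_zero_iff_of_nonneg (fun u _ => hq_nonneg u t)).1 this s hs
      apply Finset.sum_eq_zero
      intro s hs
      rw [hq0 s hs, mul_zero]
    rw [hz, add_zero]
    apply Finset.sum_congr rfl
    intro t ht
    have htDD : t ∈ iapDemandDays T d := ht
    have hσmem : σ t ∈ Finset.Icc 1 t := Finset.mem_Icc.2 ⟨(hσ t htDD).1, (hσ t htDD).2⟩
    rw [Finset.sum_eq_single_of_mem (σ t) hσmem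
      (fun s hs hne => by rw [(hsingle t htDD).2 s hs hne, mul_zero]),
      (hsingle t htDD).1]
  -- assemble
  rw [cuIapCost, csIapCost, ← hhold]
  have hH : 0 ≤ ∑ t ∈ iapDemandDays T d, h (σ t) t * d t := by
    apply Finset.sum_nonneg
    intro t ht
    have h4 := Finset.mem_Icc.1 (hDDmem t ht).1
    exact mul_nonneg (hh_nonneg (σ t) t (hσ t ht).1 (hσ t ht).2 h4.2) (hDDmem t ht).2.le
  have hcastsum : ((∑ s ∈ Finset.Icc 1 T, 2 * (⌈Q s / U⌉).toNat : ℕ) : ℝ) =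
      2 * ∑ s ∈ Finset.Icc 1 T, ((⌈Q s / U⌉ : ℤ) : ℝ) := by
    push_cast
    rw [Finset.mul_sum]
    apply Finset.sum_congr rfl
    intro s _
    congr 1
    exact_mod_cast (Int.toNat_of_nonneg (hceil_nn s))
  have hcardR : (((iapDemandDays T d).image (fun t => (σ t, τ t))).card : ℝ) ≤
      2 * ∑ s ∈ Finset.Icc 1 T, ((⌈Q s / U⌉ : ℤ) : ℝ) := by
    rw [← hcastsum]
    exact_mod_cast hcard
  have hWc : W * (((iapDemandDays T d).image (fun t => (σ t, τ t))).card : ℝ) ≤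
      W * (2 * ∑ s ∈ Finset.Icc 1 T, ((⌈Q s / U⌉ : ℤ) : ℝ)) :=
    mul_le_mul_of_nonneg_left hcardR hW
  simp only [hQ] at hWc
  linarith
end

section
/- Let V be a finite set, let w : V → ℝ≥0 (interpreted as distances from a fixed client v, so that w attains the value 0 at v), let S be a finite index set of days, and let y : V × S → ℝ≥0 and z : V → ℝ≥0 satisfy: (i) z(u) ≥ ∑_{s∈S} y(u,s) for every u ∈ V, and (ii) ∑_{u∈V} ∑_{s∈S} y(u,s) ≥ 1/2. Define W = ∑_{u∈V} ∑_{s∈S} w(u)·y(u,s) and B = {u ∈ V : w(u) ≤ 4W}. Then ∑_{u∈B} z(u) ≥ 1/4. -/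
open Classical

/-- Concentration lemma for the facility-cost bound: if the fractional openings `z`
dominate the fractional services `y`, and at least half a unit of fractional service is
accumulated, then the ball of radius `4W` around the client (where `W` is the
fractional connection cost) contains at least `1/4` of fractional opening. -/
theorem concentration_lemma {V S : Type*} [Fintype V] [Fintype S]
    (w : V → ℝ) (hw : ∀ u, 0 ≤ w u) (hw0 : ∃ v, w v = 0)
    (y : V → S → ℝ) (hy : ∀ u s, 0 ≤ y u s)
    (z : V → ℝ) (hz : ∀ u, 0 ≤ z u)
    (hzy : ∀ u, ∑ s, y u s ≤ z u)
    (hhalf : (1 : ℝ) / 2 ≤ ∑ u, ∑ s, y u s) :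
    (1 : ℝ) / 4 ≤
      ∑ u ∈ Finset.univ.filter
        (fun u => w u ≤ 4 * ∑ u', ∑ s, w u' * y u' s), z u := by
  set W : ℝ := ∑ u', ∑ s, w u' * y u' s with hW
  set B : Finset V := Finset.univ.filter (fun u => w u ≤ 4 * W) with hB
  have hWnn : 0 ≤ W := Finset.sum_nonneg fun u _ =>
    Finset.sum_nonneg fun s _ => mul_nonneg (hw u) (hy u s)
  -- the out-of-ball fractional service is at most 1/4
  have hout : ∑ u ∈ Bᶜ, ∑ s, y u s ≤ 1 / 4 := by
    rcases eq_or_lt_of_le hWnn with hW0 | hWpos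
    · -- W = 0 : every out-of-ball y is zero
      have : ∀ u ∈ Bᶜ, ∑ s, y u s = 0 := by
        intro u hu
        have hwu : 4 * W < w u := by
          simpa [hB, Finset.mem_compl, Finset.mem_filter, not_le] using hu
        have hwu' : 0 < w u := by linarith
        have hterm : ∑ s, w u * y u s = 0 := by
          have h1 : ∑ s, w u * y u s ≤ W := by
            rw [hW]
            exact Finset.single_le_sum (f := fun u' => ∑ s, w u' * y u' s)
              (fun u' _ => Finset.sum_nonneg fun s _ => mul_nonneg (hw u') (hy u' s))
              (Finset.mem_univ u)
          have h2 : 0 ≤ ∑ s, w u * y u s :=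
            Finset.sum_nonneg fun s _ => mul_nonneg (hw u) (hy u s)
          linarith [hW0]
        rw [← Finset.mul_sum] at hterm
        have := (mul_eq_zero.mp hterm).resolve_left (ne_of_gt hwu')
        simpa using this
      rw [Finset.sum_congr rfl this]
      simp
    · -- W > 0 : Markov
      have key : 4 * W * ∑ u ∈ Bᶜ, ∑ s, y u s ≤ W := by
        have h1 : ∀ u ∈ Bᶜ, 4 * W * ∑ s, y u s ≤ ∑ s, w u * y u s := by
          intro u hu
          have hwu : 4 * W < w u := by
            simpa [hB, Finset.mem_compl, Finset.mem_filter, not_le] using hu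
          rw [← Finset.mul_sum]
          exact mul_le_mul_of_nonneg_right (le_of_lt hwu)
            (Finset.sum_nonneg fun s _ => hy u s)
        calc 4 * W * ∑ u ∈ Bᶜ, ∑ s, y u s
            = ∑ u ∈ Bᶜ, 4 * W * ∑ s, y u s := by rw [Finset.mul_sum]
          _ ≤ ∑ u ∈ Bᶜ, ∑ s, w u * y u s := Finset.sum_le_sum h1
          _ ≤ W := by
              rw [hW]
              exact Finset.sum_le_sum_of_subset_of_nonneg (Finset.subset_univ _)
                (fun u _ _ => Finset.sum_nonneg fun s _ =>
                  mul_nonneg (hw u) (hy u s))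
      have h4W : (0:ℝ) < 4 * W := by linarith
      nlinarith [key]
  have hsplit : ∑ u ∈ B, ∑ s, y u s + ∑ u ∈ Bᶜ, ∑ s, y u s = ∑ u, ∑ s, y u s :=
    Finset.sum_add_sum_compl B _
  have hin : 1 / 4 ≤ ∑ u ∈ B, ∑ s, y u s := by linarith
  calc (1:ℝ) / 4 ≤ ∑ u ∈ B, ∑ s, y u s := hin
    _ ≤ ∑ u ∈ B, z u := Finset.sum_le_sum fun u _ => hzy u
end

section
/- Let t ≥ 1 and s* ∈ {1,…,t}. Let x_1, …, x_t ≥ 0 satisfy ∑_{s=1}^t x_s ≥ 1 and ∑_{s=s*+1}^{t} x_s < 1/2, and let H_1 ≥ H_2 ≥ … ≥ H_t ≥ 0. Then for every s̃ with s* ≤ s̃ ≤ t, H_{s̃} ≤ 2·∑_{s=1}^{s*} H_s·x_s. -/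
/-- Holding-cost charging argument: if the fractional service `x` accumulates at least
one unit on `{1,…,t}` and less than half a unit on `{s*+1,…,t}`, and the holding costs
`H` are nonincreasing and nonnegative on `{1,…,t}`, then the holding cost of any actual
service day `s̃ ∈ [s*, t]` is at most twice the fractional holding cost up to `s*`. -/
theorem holding_cost_charge (t sstar : ℕ) (ht : 1 ≤ t)
    (hs1 : 1 ≤ sstar) (hs2 : sstar ≤ t)
    (x : ℕ → ℝ) (hx : ∀ s, 1 ≤ s → s ≤ t → 0 ≤ x s)
    (hsum : 1 ≤ ∑ s ∈ Finset.Icc 1 t, x s)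
    (htail : ∑ s ∈ Finset.Icc (sstar + 1) t, x s < 1 / 2)
    (H : ℕ → ℝ) (hH0 : ∀ s, 1 ≤ s → s ≤ t → 0 ≤ H s)
    (hHmono : ∀ s s', 1 ≤ s → s ≤ s' → s' ≤ t → H s' ≤ H s) :
    ∀ stilde, sstar ≤ stilde → stilde ≤ t →
      H stilde ≤ 2 * ∑ s ∈ Finset.Icc 1 sstar, H s * x s := by
  intro stilde h1 h2
  have hsplit : (∑ s ∈ Finset.Ioc 0 sstar, x s) + ∑ s ∈ Finset.Ioc sstar t, x s
      = ∑ s ∈ Finset.Ioc 0 t, x s :=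
    Finset.sum_Ioc_consecutive _ (Nat.zero_le _) hs2
  have e1 : Finset.Icc 1 t = Finset.Ioc 0 t := rfl
  have e2 : Finset.Icc 1 sstar = Finset.Ioc 0 sstar := rfl
  have e3 : Finset.Icc (sstar + 1) t = Finset.Ioc sstar t := by
    exact Finset.Icc_add_one_left_eq_Ioc sstar t
  have hhead : 1 / 2 ≤ ∑ s ∈ Finset.Icc 1 sstar, x s := by
    rw [e2]
    rw [e1] at hsum; rw [e3] at htail
    linarith
  have hle : H stilde * ∑ s ∈ Finset.Icc 1 sstar, x s
      ≤ ∑ s ∈ Finset.Icc 1 sstar, H s * x s := by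
    rw [Finset.mul_sum]
    apply Finset.sum_le_sum
    intro s hs
    rw [Finset.mem_Icc] at hs
    exact mul_le_mul_of_nonneg_right
      (hHmono s stilde hs.1 (hs.2.trans h1) h2) (hx s hs.1 (hs.2.trans hs2))
  have hHt : 0 ≤ H stilde := hH0 stilde (hs1.trans h1) h2
  nlinarith
end

section
/- Let T ∈ ℕ, U > 0, let D ⊆ {1,…,T} be a set of demand days with demands d_t > 0 for t ∈ D, and let x(s,t) ≥ 0 (for 1 ≤ s ≤ t ≤ T) and y_s ≥ 0 (for 1 ≤ s ≤ T) satisfy: (i) ∑_{s≤t} x(s,t) ≥ 1 for every t ∈ D; (ii) y_s ≥ ∑_{t∈D, t≥s} x(s,t)·d_t/U for every s; and (iii) y_s ≥ x(s,t) for all s ≤ t. Suppose A ⊆ D is a set of anchors such that each anchor t ∈ A has an associated day s_t ≤ t with ∑_{s=s_t}^{t} x(s,t) ≥ 1/2, the intervals [s_t, t] for t ∈ A are pairwise disjoint, and there is a function g : D → A with s_{g(t')} ≤ t' for every t' ∈ D assigning each demand day to an anchor. Then ∑_{t∈A} ⌈(∑_{t'∈D : g(t')=t} d_{t'})/U⌉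 ≤ 3·∑_{s=1}^{T} y_s. -/
open Classical

/-- Routing-cost bound for Capacitated Splittable IAP: given LP values `x, y`
satisfying the service, capacity and trip constraints, and anchors `A ⊆ D` with
service days `sA` whose windows `[sA t, t]` each capture half a unit of fractional
service and are pairwise disjoint, with every demand day assigned by `g` to an anchor
whose service day is no later, the total number of trips made by the algorithm is at
most `3 ∑_s y s`. -/
theorem cs_iap_routing_bound
    (T : ℕ) (U : ℝ) (hU : 0 < U)
    (D : Finset ℕ) (hD : D ⊆ Finset.Icc 1 T)
    (d : ℕ → ℝ) (hd : ∀ t ∈ D, 0 < d t)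
    (x : ℕ → ℕ → ℝ) (hx : ∀ s t, 0 ≤ x s t)
    (y : ℕ → ℝ) (hy : ∀ s, 0 ≤ y s)
    (hserve : ∀ t ∈ D, 1 ≤ ∑ s ∈ Finset.Icc 1 t, x s t)
    (hcap : ∀ s ∈ Finset.Icc 1 T,
      ∑ t ∈ D.filter (fun t => s ≤ t), x s t * d t / U ≤ y s)
    (htrip : ∀ s t, 1 ≤ s → s ≤ t → t ≤ T → x s t ≤ y s)
    (A : Finset ℕ) (hA : A ⊆ D)
    (sA : ℕ → ℕ)
    (hsA : ∀ t ∈ A, 1 ≤ sA t ∧ sA t ≤ t ∧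
      (1 : ℝ) / 2 ≤ ∑ s ∈ Finset.Icc (sA t) t, x s t)
    (hdisj : ∀ t ∈ A, ∀ t' ∈ A, t ≠ t' →
      Disjoint (Finset.Icc (sA t) t) (Finset.Icc (sA t') t'))
    (g : ℕ → ℕ) (hg : ∀ t' ∈ D, g t' ∈ A ∧ sA (g t') ≤ t') :
    ∑ t ∈ A, ((⌈(∑ t' ∈ D.filter (fun t' => g t' = t), d t') / U⌉ : ℤ) : ℝ)
      ≤ 3 * ∑ s ∈ Finset.Icc 1 T, y s := by
  classical
  have hTy : 0 ≤ ∑ s ∈ Finset.Icc 1 T, y s := Finset.sum_nonneg fun s _ => hy s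
  have hpart : ∑ t ∈ A, ∑ t' ∈ D.filter (fun t' => g t' = t), d t' = ∑ t' ∈ D, d t' :=
    Finset.sum_fiberwise_of_maps_to (fun t' ht' => (hg t' ht').1) d
  have hdem : (∑ t' ∈ D, d t') / U ≤ ∑ s ∈ Finset.Icc 1 T, y s := by
    have h1 : ∑ s ∈ Finset.Icc 1 T, ∑ t ∈ D.filter (fun t => s ≤ t), x s t * d t / U
        ≤ ∑ s ∈ Finset.Icc 1 T, y s := Finset.sum_le_sum fun s hs => hcap s hs
    have h2 : ∑ s ∈ Finset.Icc 1 T, ∑ t ∈ D.filter (fun t => s ≤ t), x s t * d t / U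
        = ∑ t ∈ D, ∑ s ∈ Finset.Icc 1 t, x s t * d t / U := by
      apply Finset.sum_comm'
      intro s t
      simp only [Finset.mem_Icc, Finset.mem_filter]
      constructor
      · rintro ⟨⟨h1s, _⟩, htD, hst⟩; exact ⟨⟨h1s, hst⟩, htD⟩
      · rintro ⟨⟨h1s, hst⟩, htD⟩
        exact ⟨⟨h1s, hst.trans (Finset.mem_Icc.mp (hD htD)).2⟩, htD, hst⟩
    have h3 : ∀ t ∈ D, d t / U ≤ ∑ s ∈ Finset.Icc 1 t, x s t * d t / U := by
      intro t ht
      have hs1 := hserve t ht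
      have hdU : 0 ≤ d t / U := div_nonneg (hd t ht).le hU.le
      calc d t / U = 1 * (d t / U) := by ring
        _ ≤ (∑ s ∈ Finset.Icc 1 t, x s t) * (d t / U) :=
            mul_le_mul_of_nonneg_right hs1 hdU
        _ = ∑ s ∈ Finset.Icc 1 t, x s t * d t / U := by
            rw [Finset.sum_mul]; apply Finset.sum_congr rfl; intros; ring
    calc (∑ t' ∈ D, d t') / U = ∑ t ∈ D, d t / U := by rw [Finset.sum_div]
      _ ≤ ∑ t ∈ D, ∑ s ∈ Finset.Icc 1 t, x s t * d t / U := Finset.sum_le_sum h3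
      _ = ∑ s ∈ Finset.Icc 1 T, ∑ t ∈ D.filter (fun t => s ≤ t), x s t * d t / U := h2.symm
      _ ≤ _ := h1
  have hcard : (A.card : ℝ) ≤ 2 * ∑ s ∈ Finset.Icc 1 T, y s := by
    have hhalf : ∀ t ∈ A, (1:ℝ)/2 ≤ ∑ s ∈ Finset.Icc (sA t) t, y s := by
      intro t ht
      obtain ⟨h1, h2, h3⟩ := hsA t ht
      refine h3.trans (Finset.sum_le_sum ?_)
      intro s hs
      simp only [Finset.mem_Icc] at hs
      have htT : t ≤ T := by
        have := hD (hA ht); simp only [Finset.mem_Icc] at this; exact this.2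
      exact htrip s t (h1.trans hs.1) hs.2 htT
    have hsub : ∀ t ∈ A, Finset.Icc (sA t) t ⊆ Finset.Icc 1 T := by
      intro t ht s hs
      obtain ⟨h1, h2, _⟩ := hsA t ht
      simp only [Finset.mem_Icc] at hs ⊢
      have htT : t ≤ T := by
        have := hD (hA ht); simp only [Finset.mem_Icc] at this; exact this.2
      exact ⟨h1.trans hs.1, hs.2.trans htT⟩
    have hbiU : ∑ t ∈ A, ∑ s ∈ Finset.Icc (sA t) t, y s ≤ ∑ s ∈ Finset.Icc 1 T, y s := by
      rw [← Finset.sum_biUnion (fun t ht t' ht' hne => hdisj t ht t' ht' hne)]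
      apply Finset.sum_le_sum_of_subset_of_nonneg
      · intro s hs
        simp only [Finset.mem_biUnion] at hs
        obtain ⟨t, ht, hs⟩ := hs
        exact hsub t ht hs
      · intro s _ _; exact hy s
    have hmain : (A.card : ℝ) * (1/2) ≤ ∑ s ∈ Finset.Icc 1 T, y s := by
      calc (A.card : ℝ) * (1/2) = ∑ _t ∈ A, (1:ℝ)/2 := by simp [mul_comm]
        _ ≤ ∑ t ∈ A, ∑ s ∈ Finset.Icc (sA t) t, y s := Finset.sum_le_sum hhalf
        _ ≤ _ := hbiU
    linarith
  have hceil : ∀ t ∈ A,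
      ((⌈(∑ t' ∈ D.filter (fun t' => g t' = t), d t') / U⌉ : ℤ) : ℝ)
        ≤ (∑ t' ∈ D.filter (fun t' => g t' = t), d t') / U + 1 :=
    fun t _ => le_of_lt (Int.ceil_lt_add_one _)
  calc ∑ t ∈ A, ((⌈(∑ t' ∈ D.filter (fun t' => g t' = t), d t') / U⌉ : ℤ) : ℝ)
      ≤ ∑ t ∈ A, ((∑ t' ∈ D.filter (fun t' => g t' = t), d t') / U + 1) :=
        Finset.sum_le_sum hceil
    _ = (∑ t ∈ A, ∑ t' ∈ D.filter (fun t' => g t' = t), d t') / U + A.card := by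
        rw [Finset.sum_add_distrib, Finset.sum_div]; simp
    _ = (∑ t' ∈ D, d t') / U + A.card := by rw [hpart]
    _ ≤ ∑ s ∈ Finset.Icc 1 T, y s + 2 * ∑ s ∈ Finset.Icc 1 T, y s := add_le_add hdem hcard
    _ = 3 * ∑ s ∈ Finset.Icc 1 T, y s := by ring
end

section
/- Let T ∈ ℕ, let D ⊆ {1,…,T} be a set of demand days with demands d_t > 0 for t ∈ D, and let h(s,t) ≥ 0 for 1 ≤ s ≤ t ≤ T be per-unit holding costs that are nonincreasing in s. For any assignment σ : D → {1,…,T} of service days with σ(t) ≤ t, there exists an assignment σ' : D → {1,…,T} such that: σ'(t) ≤ t for all t ∈ D; the image of σ' is contained in the image of σ (so no new visit days are used); σ' is nondecreasing on D (demands are served in deadline order); and ∑_{t∈D} h(σ'(t),t)·d_t ≤ ∑_{t∈D} h(σ(t),t)·d_t. -/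
/-- In-order service property: for a single client with nonincreasing per-unit holding
costs, any assignment of service days can be replaced by one using no new visit days,
serving demands in deadline order, without increasing the total holding cost. -/
theorem in_order_service
    (T : ℕ) (D : Finset ℕ) (hD : D ⊆ Finset.Icc 1 T)
    (d : ℕ → ℝ) (hd : ∀ t ∈ D, 0 < d t)
    (h : ℕ → ℕ → ℝ)
    (hh_nonneg : ∀ s t, 1 ≤ s → s ≤ t → t ≤ T → 0 ≤ h s t)
    (hh_mono : ∀ s s' t, 1 ≤ s → s ≤ s' → s' ≤ t → t ≤ T → h s' t ≤ h s t)
    (σ : ℕ → ℕ) (hσ : ∀ t ∈ D, 1 ≤ σ t ∧ σ t ≤ t) :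
    ∃ σ' : ℕ → ℕ,
      (∀ t ∈ D, σ' t ≤ t) ∧
      D.image σ' ⊆ D.image σ ∧
      (∀ t ∈ D, ∀ t' ∈ D, t ≤ t' → σ' t ≤ σ' t') ∧
      ∑ t ∈ D, h (σ' t) t * d t ≤ ∑ t ∈ D, h (σ t) t * d t := by
  set S := D.image σ with hS
  refine ⟨fun t => ((S.filter (· ≤ t)).sup id), ?_, ?_, ?_, ?_⟩
  · intro t ht
    exact Finset.sup_le fun s hs => (Finset.mem_filter.mp hs).2
  · intro x hx
    obtain ⟨t, ht, rfl⟩ := Finset.mem_image.mp hx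
    have hne : (S.filter (· ≤ t)).Nonempty :=
      ⟨σ t, Finset.mem_filter.mpr ⟨Finset.mem_image_of_mem σ ht, (hσ t ht).2⟩⟩
    obtain ⟨b, hb, hbe⟩ := Finset.exists_mem_eq_sup _ hne id
    rw [hbe]
    exact Finset.mem_of_mem_filter b hb
  · intro t ht t' ht' htt
    apply Finset.sup_mono
    intro s hs
    rcases Finset.mem_filter.mp hs with ⟨h1, h2⟩
    exact Finset.mem_filter.mpr ⟨h1, le_trans h2 htt⟩
  · apply Finset.sum_le_sum
    intro t ht
    have hmem := hD ht
    rw [Finset.mem_Icc] at hmem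
    have hle : σ t ≤ (S.filter (· ≤ t)).sup id :=
      Finset.le_sup (f := id)
        (Finset.mem_filter.mpr ⟨Finset.mem_image_of_mem σ ht, (hσ t ht).2⟩)
    have hub : (S.filter (· ≤ t)).sup id ≤ t :=
      Finset.sup_le fun s hs => (Finset.mem_filter.mp hs).2
    exact mul_le_mul_of_nonneg_right
      (hh_mono _ _ _ (hσ t ht).1 hle hub hmem.2) (hd t ht).le
end
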